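/- Let n ≥ 3 be an integer. Then S(a) = cosh(a) · ∫_1^∞ (t^{2n−2} − 1)^{−1/2} · (cosh²(a)·t² − 1)^{−1/2} dt tends to +∞ as a → 0⁺ (equivalently, the height 2·S of the translation-invariant minimal hypersurface M_d tends to infinity as d = cosh^{n−1}(a) → 1⁺). -/

import Mathlib

/-!
Write `m = 2n - 2 ≥ 1` and `c = cosh a`. For `t ∈ (c², 2]` both `t^m - 1` and `c²t² - 1` are at most
a constant times `t - 1`, so the integrand is at least a constant times `(t - 1)⁻¹`, whose integral
over `(c², 2]` is `-log (c² - 1) = -log (sinh² a) → +∞` as `a → 0⁺`. Integrability on `(1, ∞)`,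
without which the integral would be the junk value `0`, follows from the domination of the
integrand by `(c² - 1)^{-1/2} (t - 1)^{-1/2} t⁻¹`.
-/

/-- `S n a = cosh(a) · ∫_1^∞ (t^{2n−2} − 1)^{-1/2} (cosh²(a)·t² − 1)^{-1/2} dt`. -/
noncomputable def S (n : ℕ) (a : ℝ) : ℝ :=
  Real.cosh a *
    ∫ t in Set.Ioi (1 : ℝ),
      (t ^ (2 * n - 2) - 1) ^ (-(1 : ℝ) / 2) *
        (Real.cosh a ^ 2 * t ^ 2 - 1) ^ (-(1 : ℝ) / 2)

open Real MeasureTheory Set Filter Topology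

lemma sq_rpow_neg_half {y : ℝ} (hy : 0 ≤ y) : (y ^ 2) ^ (-(1 : ℝ) / 2) = y⁻¹ := by
  rw [← rpow_natCast, ← rpow_mul hy]
  norm_num [rpow_neg_one]

lemma pow_sub_one_le_mul_sub_one {m : ℕ} {t b : ℝ} (ht₁ : 1 ≤ t) (ht₂ : t ≤ b) :
    t ^ m - 1 ≤ m * b ^ m * (t - 1) := by
  have hsum : ∑ i ∈ Finset.range m, t ^ i ≤ m * b ^ m := by
    simpa using Finset.sum_le_card_nsmul (Finset.range m) (t ^ ·) (b ^ m) fun i hi =>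
      (pow_le_pow_left₀ (by linarith) ht₂ i).trans
        (pow_le_pow_right₀ (ht₁.trans ht₂) (Finset.mem_range.mp hi).le)
  rw [← geom_sum_mul]
  exact mul_le_mul_of_nonneg_right hsum (by linarith)

lemma integral_Ioc_inv_sub_one {x : ℝ} (hx₁ : 1 < x) (hx₂ : x ≤ 2) :
    ∫ t in Ioc x 2, (t - 1)⁻¹ = -log (x - 1) := by
  rw [← intervalIntegral.integral_of_le hx₂, intervalIntegral.integral_comp_sub_right (·⁻¹),
    integral_inv_of_pos (by linarith) (by norm_num)]
  norm_num [log_inv]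

/-- `2 arctan √(t - 1)` is a bounded antiderivative. -/
lemma integrableOn_rpow_neg_half_sub_one_mul_inv :
    IntegrableOn (fun t : ℝ => (t - 1) ^ (-(1 : ℝ) / 2) * t⁻¹) (Ioi 1) := by
  refine integrableOn_Ioi_deriv_of_nonneg (g := fun t => 2 * arctan √(t - 1)) (l := π)
    (by fun_prop) (fun t ht => ?_) (fun t ht => ?_) ?_
  · have ht' : 0 < t - 1 := sub_pos.2 ht
    have ht₀ : t ≠ 0 := by linarith
    refine ((((hasDerivAt_id t).sub_const 1).sqrt ht'.ne').arctan.const_mul 2).congr_deriv ?_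
    rw [id, sq_sqrt ht'.le, neg_div, rpow_neg ht'.le, ← sqrt_eq_rpow]
    field_simp
    ring
  · have : 0 < t := by linarith [mem_Ioi.1 ht]
    have : 0 < t - 1 := sub_pos.2 ht
    positivity
  · have h := (tendsto_arctan_atTop.mono_right nhdsWithin_le_nhds).comp
      (tendsto_sqrt_atTop.comp (tendsto_atTop_add_const_right _ (-1) tendsto_id))
    convert h.const_mul 2 using 2
    · simp [sub_eq_add_neg]
    · ring

lemma tendsto_cosh_sq_sub_one : Tendsto (fun a => cosh a ^ 2 - 1) (𝓝[>] 0) (𝓝[>] 0) := by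
  refine tendsto_nhdsWithin_iff.2 ⟨?_, ?_⟩
  · have : Continuous (fun a => cosh a ^ 2 - 1) := by fun_prop
    simpa using (this.tendsto 0).mono_left nhdsWithin_le_nhds
  · filter_upwards [self_mem_nhdsWithin] with a ha
    rw [mem_Ioi, cosh_sq, add_sub_cancel_right]
    exact pow_pos (sinh_pos_iff.2 ha) 2

noncomputable def heightIntegrand (m : ℕ) (c t : ℝ) : ℝ :=
  (t ^ m - 1) ^ (-(1 : ℝ) / 2) * (c ^ 2 * t ^ 2 - 1) ^ (-(1 : ℝ) / 2)

section

variable {m : ℕ} {c t : ℝ}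

lemma heightIntegrand_nonneg (hc : 1 ≤ c) (ht : 1 ≤ t) : 0 ≤ heightIntegrand m c t := by
  have h₁ : 0 ≤ t ^ m - 1 := sub_nonneg.2 (one_le_pow₀ ht)
  have h₂ : 0 ≤ c ^ 2 * t ^ 2 - 1 :=
    sub_nonneg.2 (one_le_mul_of_one_le_of_one_le (one_le_pow₀ hc) (one_le_pow₀ ht))
  unfold heightIntegrand
  positivity

lemma heightIntegrand_le (hm : m ≠ 0) (hc : 1 < c) (ht : 1 < t) :
    heightIntegrand m c t ≤
      (c ^ 2 - 1) ^ (-(1 : ℝ) / 2) * ((t - 1) ^ (-(1 : ℝ) / 2) * t⁻¹) := by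
  have hs : 0 < c ^ 2 - 1 := by nlinarith
  have ht' : 0 < t - 1 := by linarith
  have h₁ : (t ^ m - 1) ^ (-(1 : ℝ) / 2) ≤ (t - 1) ^ (-(1 : ℝ) / 2) :=
    rpow_le_rpow_of_nonpos ht' (by linarith [le_self_pow₀ ht.le hm]) (by norm_num)
  have h₂ : (c ^ 2 * t ^ 2 - 1) ^ (-(1 : ℝ) / 2) ≤ (c ^ 2 - 1) ^ (-(1 : ℝ) / 2) * t⁻¹ := by
    rw [← sq_rpow_neg_half (by linarith : 0 ≤ t), ← mul_rpow hs.le (by positivity)]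
    exact rpow_le_rpow_of_nonpos (by positivity) (by nlinarith) (by norm_num)
  calc heightIntegrand m c t
      ≤ (t - 1) ^ (-(1 : ℝ) / 2) * ((c ^ 2 - 1) ^ (-(1 : ℝ) / 2) * t⁻¹) :=
        mul_le_mul h₁ h₂ (rpow_nonneg (by nlinarith) _) (rpow_nonneg ht'.le _)
    _ = _ := by ring

lemma le_heightIntegrand (hm : m ≠ 0) (hc : 1 ≤ c) (ht : t ∈ Ioc (c ^ 2) 2) :
    (7 * m * 2 ^ m) ^ (-(1 : ℝ) / 2) * (t - 1)⁻¹ ≤ heightIntegrand m c t := by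
  obtain ⟨ht₁, ht₂⟩ := ht
  have hc₂ : 1 ≤ c ^ 2 := one_le_pow₀ hc
  have ht' : 0 < t - 1 := by linarith
  have hpow : 0 < t ^ m - 1 := by linarith [one_lt_pow₀ (by linarith : 1 < t) hm]
  have h₁ : t ^ m - 1 ≤ m * 2 ^ m * (t - 1) := pow_sub_one_le_mul_sub_one (by linarith) ht₂
  -- `c²t² - 1 = (t² - 1) + (c² - 1) t² ≤ 3 (t - 1) + 4 (t - 1)`
  have h₂ : c ^ 2 * t ^ 2 - 1 ≤ 7 * (t - 1) := by
    nlinarith [mul_nonneg (sub_nonneg.2 ht₁.le) (sq_nonneg t),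
      mul_nonneg (sub_nonneg.2 ht₂) ht'.le]
  calc (7 * m * 2 ^ m) ^ (-(1 : ℝ) / 2) * (t - 1)⁻¹
      = (m * 2 ^ m * (t - 1)) ^ (-(1 : ℝ) / 2) * (7 * (t - 1)) ^ (-(1 : ℝ) / 2) := by
        rw [← mul_rpow (by positivity) (by positivity), ← sq_rpow_neg_half ht'.le,
          ← mul_rpow (by positivity) (by positivity)]
        ring_nf
    _ ≤ heightIntegrand m c t :=
        mul_le_mul (rpow_le_rpow_of_nonpos hpow h₁ (by norm_num))
          (rpow_le_rpow_of_nonpos (by nlinarith) h₂ (by norm_num)) (by positivity)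
          (rpow_nonneg hpow.le _)

lemma integrableOn_heightIntegrand (hm : m ≠ 0) (hc : 1 < c) :
    IntegrableOn (heightIntegrand m c) (Ioi 1) := by
  refine (integrableOn_rpow_neg_half_sub_one_mul_inv.const_mul
    ((c ^ 2 - 1) ^ (-(1 : ℝ) / 2))).mono' (by unfold heightIntegrand; fun_prop) ?_
  filter_upwards [ae_restrict_mem measurableSet_Ioi] with t ht
  rw [norm_of_nonneg (heightIntegrand_nonneg hc.le (le_of_lt ht))]
  exact heightIntegrand_le hm hc ht

lemma neg_log_le_integral_heightIntegrand (hm : m ≠ 0) (hc₁ : 1 < c) (hc₂ : c ^ 2 ≤ 2) :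
    (7 * m * 2 ^ m) ^ (-(1 : ℝ) / 2) * -log (c ^ 2 - 1) ≤
      ∫ t in Ioi 1, heightIntegrand m c t := by
  have hc : 1 < c ^ 2 := one_lt_pow₀ hc₁ two_ne_zero
  have hsub : Ioc (c ^ 2) 2 ⊆ Ioi 1 := Ioc_subset_Ioi_self.trans (Ioi_subset_Ioi hc.le)
  have hF := integrableOn_heightIntegrand hm hc₁
  calc (7 * m * 2 ^ m) ^ (-(1 : ℝ) / 2) * -log (c ^ 2 - 1)
      = ∫ t in Ioc (c ^ 2) 2, (7 * m * 2 ^ m) ^ (-(1 : ℝ) / 2) * (t - 1)⁻¹ := by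
        rw [integral_const_mul, integral_Ioc_inv_sub_one hc hc₂]
    _ ≤ ∫ t in Ioc (c ^ 2) 2, heightIntegrand m c t := by
        refine setIntegral_mono_on ?_ (hF.mono_set hsub) measurableSet_Ioc
          fun t ht => le_heightIntegrand hm hc₁.le ht
        refine (ContinuousOn.integrableOn_Icc ?_).mono_set Ioc_subset_Icc_self
        exact continuousOn_const.mul <| (continuous_sub_right 1).continuousOn.inv₀
          fun t ht => (sub_pos.2 (hc.trans_le ht.1)).ne'
    _ ≤ ∫ t in Ioi 1, heightIntegrand m c t :=
        setIntegral_mono_set hF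
          ((ae_restrict_mem measurableSet_Ioi).mono
            fun t ht => heightIntegrand_nonneg hc₁.le (le_of_lt ht))
          hsub.eventuallyLE

end

/-- For `n ≥ 3`, `S(a)` tends to `+∞` as `a → 0⁺` (i.e. the height of the
translation-invariant minimal hypersurface `M_d` tends to infinity as
`d = cosh^{n−1}(a) → 1⁺`). -/
theorem S_tendsto_atTop (n : ℕ) (hn : 3 ≤ n) :
    Filter.Tendsto (S n) (nhdsWithin 0 (Set.Ioi 0)) Filter.atTop := by
  set m := 2 * n - 2
  have hm : m ≠ 0 := by omega
  set K : ℝ := (7 * m * 2 ^ m) ^ (-(1 : ℝ) / 2)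
  have hK : 0 < K := rpow_pos_of_pos (by positivity) _
  have hlog : Tendsto (fun a => K * -log (cosh a ^ 2 - 1)) (𝓝[>] 0) atTop :=
    (tendsto_neg_atBot_atTop.comp
      (tendsto_log_nhdsGT_zero.comp tendsto_cosh_sq_sub_one)).const_mul_atTop hK
  have hsmall : ∀ᶠ a in 𝓝[>] 0, cosh a ^ 2 - 1 < 1 :=
    (tendsto_cosh_sq_sub_one.mono_right nhdsWithin_le_nhds).eventually
      (eventually_lt_nhds one_pos)
  refine tendsto_atTop_mono' _ ?_ hlog
  filter_upwards [self_mem_nhdsWithin, hsmall] with a ha has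
  calc K * -log (cosh a ^ 2 - 1) ≤ ∫ t in Ioi 1, heightIntegrand m (cosh a) t :=
        neg_log_le_integral_heightIntegrand hm (one_lt_cosh.2 (ne_of_gt ha)) (by linarith)
    _ ≤ S n a := le_mul_of_one_le_left (setIntegral_nonneg measurableSet_Ioi
        fun t ht => heightIntegrand_nonneg (one_le_cosh a) (le_of_lt ht)) (one_le_cosh a)
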